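/- Let Q be a finite connected simply-laced cluster quiver (no loops, no oriented 2-cycles, at most one arrow between any two vertices) which does not contain any non-oriented full (chordless) cycle, i.e. every chordless cycle of the underlying graph of Q is an oriented cycle in Q. Let S and S' be two sets of arrows of Q such that for every full (chordless) cycle C of Q, the number of arrows of C contained in S is congruent modulo 2 to the number of arrows of C contained in S'. Then the signed graph Σ(q_{S'}) can be obtained from the signed graph Σ(q_S) by a sequence of sign changes at pairwise distinct vertices which does not use all vertices of Q; equivalently, there is a proper subset W of the vertex set of Q such that Σ(q_{S'}) is obtained from Σ(q_S) by switching at every vertex of W. -/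
import Mathlib


open Finset

/-- A (simply-laced) quiver on `Fin n` is given by its set `E` of arrows
(ordered pairs).  It is a cluster quiver if it has no loops and no oriented cycles of
length two. -/
def IsClusterQuiver {n : ℕ} (E : Finset (Fin n × Fin n)) : Prop :=
  (∀ p ∈ E, p.1 ≠ p.2) ∧ ∀ i j : Fin n, ¬((i, j) ∈ E ∧ (j, i) ∈ E)

/-- The underlying (simple) graph of the quiver with arrow set `E`. -/
def quiverGraph {n : ℕ} (E : Finset (Fin n × Fin n)) : SimpleGraph (Fin n) :=
  SimpleGraph.fromRel fun i j => (i, j) ∈ E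

/-- `c` is a full (chordless) cycle of the quiver with arrow set `E`: a cycle of length
`m + 3 ≥ 3` in the underlying graph whose vertex set induces no further arrows. -/
def IsFullCycle {n m : ℕ} (E : Finset (Fin n × Fin n)) (c : Fin (m + 3) → Fin n) : Prop :=
  Function.Injective c ∧
    (∀ k, (c k, c (k + 1)) ∈ E ∨ (c (k + 1), c k) ∈ E) ∧
    (∀ k l : Fin (m + 3), (c k, c l) ∈ E → l = k + 1 ∨ k = l + 1)

/-- A full cycle is oriented if its arrows form a directed cycle. -/
def IsOrientedCycle {n m : ℕ} (E : Finset (Fin n × Fin n))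
    (c : Fin (m + 3) → Fin n) : Prop :=
  (∀ k, (c k, c (k + 1)) ∈ E) ∨ (∀ k, (c (k + 1), c k) ∈ E)

/-- The number of arrows of the cycle `c` which belong to the set of arrows `S`. -/
def arrowCount {n m : ℕ} (S : Finset (Fin n × Fin n)) (c : Fin (m + 3) → Fin n) : ℕ :=
  (Finset.univ.filter fun k : Fin (m + 3) =>
    (c k, c (k + 1)) ∈ S ∨ (c (k + 1), c k) ∈ S).card

/-- The sign matrix of the signed graph `Σ(q_S)`: the underlying graph of the quiver
with arrow set `E`, where an edge is dotted (`+1`) if its arrow lies in `S` and solid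
(`-1`) otherwise. -/
def signOf {n : ℕ} (E S : Finset (Fin n × Fin n)) : Fin n → Fin n → ℤ :=
  fun i j =>
    if (i, j) ∈ E ∨ (j, i) ∈ E then
      if (i, j) ∈ S ∨ (j, i) ∈ S then 1 else -1
    else 0

/-- Switching simultaneously at all vertices of a set `W`: the sign of an edge is
toggled exactly when the edge has exactly one endpoint in `W`. -/
def switchSet {n : ℕ} (a : Fin n → Fin n → ℤ) (W : Finset (Fin n)) :
    Fin n → Fin n → ℤ :=
  fun i j => if (i ∈ W) ↔ (j ∈ W) then a i j else -a i j

def dd {n : ℕ} (S S' : Finset (Fin n × Fin n)) (i j : Fin n) : ZMod 2 :=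
  (if (i,j) ∈ S ∨ (j,i) ∈ S then 1 else 0) + (if (i,j) ∈ S' ∨ (j,i) ∈ S' then 1 else 0)

lemma dd_symm {n : ℕ} (S S' : Finset (Fin n × Fin n)) (i j : Fin n) :
    dd S S' i j = dd S S' j i := by
  unfold dd
  congr 1 <;> simp [or_comm]

lemma sum_rotate {M : Type*} [AddCommMonoid M] (F : ℕ → M) (L a : ℕ) (ha : a < L) :
    ∑ j ∈ Finset.range L, F ((j + a) % L) = ∑ j ∈ Finset.range L, F j := by
  have hL : 0 < L := lt_of_le_of_lt (Nat.zero_le a) ha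
  refine Finset.sum_nbij' (fun j => (j + a) % L) (fun j => (j + (L - a)) % L)
    (fun j hj => ?_) (fun j hj => ?_) (fun j hj => ?_) (fun j hj => ?_) (fun j hj => rfl)
  · exact Finset.mem_range.mpr (Nat.mod_lt _ hL)
  · exact Finset.mem_range.mpr (Nat.mod_lt _ hL)
  · rw [Finset.mem_range] at hj
    show ((j + a) % L + (L - a)) % L = j
    rw [Nat.mod_add_mod]
    have h1 : j + a + (L - a) = j + L := by omega
    rw [h1, Nat.add_mod_right, Nat.mod_eq_of_lt hj]
  · rw [Finset.mem_range] at hj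
    show ((j + (L - a)) % L + a) % L = j
    rw [Nat.mod_add_mod]
    have h1 : j + (L - a) + a = j + L := by omega
    rw [h1, Nat.add_mod_right, Nat.mod_eq_of_lt hj]

theorem cyc {n : ℕ} (E S S' : Finset (Fin n × Fin n)) (hq : IsClusterQuiver E)
    (hpar : ∀ (m : ℕ) (c : Fin (m + 3) → Fin n), IsFullCycle E c →
      arrowCount S c % 2 = arrowCount S' c % 2) :
    ∀ m : ℕ, ∀ c : ℕ → Fin n, c (m+3) = c 0 →
      (∀ j k, j < m+3 → k < m+3 → c j = c k → j = k) →
      (∀ j, j < m+3 → ((c j, c (j+1)) ∈ E ∨ (c (j+1), c j) ∈ E)) →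
      ∑ j ∈ Finset.range (m+3), dd S S' (c j) (c (j+1)) = 0 := by
  intro m
  induction m using Nat.strong_induction_on with
  | _ m IH =>
  intro c h0 hinj hadj
  set L := m + 3 with hL
  have hL3 : 3 ≤ L := by omega
  -- the Fin-indexed version
  set ch : Fin (m+3) → Fin n := fun k => c k.val with hch
  have key : ∀ k : Fin (m+3), ch (k+1) = c (k.val + 1) := by
    intro k
    by_cases hk : k = Fin.last (m+2)
    · subst hk
      show c ((Fin.last (m+2) + 1).val) = _
      have : (Fin.last (m+2) + 1 : Fin (m+3)).val = 0 := by
        simp [Fin.last, Fin.add_def]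
      rw [this]
      rw [show (Fin.last (m+2)).val + 1 = m + 3 from rfl, h0]
    · show c ((k + 1).val) = _
      congr 1
      rw [Fin.val_add_one]
      simp [hk]
  have hsum : ∑ j ∈ Finset.range (m+3), dd S S' (c j) (c (j+1))
      = ∑ k : Fin (m+3), dd S S' (ch k) (ch (k+1)) := by
    rw [← Fin.sum_univ_eq_sum_range (fun j => dd S S' (c j) (c (j+1))) (m+3)]
    exact Finset.sum_congr rfl fun k _ => by rw [key k]
  by_cases hfull : ∀ k l : Fin (m+3), (ch k, ch l) ∈ E → l = k + 1 ∨ k = l + 1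
  · -- chordless: a full cycle, use the parity hypothesis
    have hfc : IsFullCycle E ch := by
      refine ⟨fun k l hkl => ?_, fun k => ?_, hfull⟩
      · exact Fin.ext (hinj k.val l.val k.isLt l.isLt hkl)
      · rw [key]; exact hadj k.val k.isLt
    have hp := hpar m ch hfc
    rw [hsum]
    unfold dd
    rw [Finset.sum_add_distrib, Finset.sum_boole, Finset.sum_boole]
    have hcast : ((arrowCount S ch : ℕ) : ZMod 2) = ((arrowCount S' ch : ℕ) : ZMod 2) := by
      rw [ZMod.natCast_eq_natCast_iff]
      exact hp
    unfold arrowCount at hcast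
    rw [hcast]
    exact CharTwo.add_self_eq_zero _
  · push_neg at hfull
    obtain ⟨k, l, hkl, h1, h2⟩ := hfull
    have hlk : l ≠ k := by
      intro h; subst h
      exact hq.1 _ hkl rfl
    -- rotate so the chord starts at position 0
    set a := k.val with hadef
    have haL : a < L := k.isLt
    set b : ℕ → Fin n := fun j => c ((j + a) % L) with hb
    have hwrap : ∀ x : ℕ, c ((x + 1) % L) = c (x % L + 1) := by
      intro x
      have hx : x % L < L := Nat.mod_lt _ (by omega)
      rcases Nat.lt_or_ge (x % L) (L - 1) with h | h
      · have : (x + 1) % L = x % L + 1 := by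
          rw [Nat.add_mod, Nat.mod_eq_of_lt (show 1 < L by omega), Nat.mod_eq_of_lt (by omega)]
        rw [this]
      · have hxe : x % L = m + 2 := by omega
        have : (x + 1) % L = 0 := by
          rw [Nat.add_mod, hxe, Nat.mod_eq_of_lt (show 1 < L by omega)]
          simp [hL]
        rw [this, hxe]
        exact h0.symm
    have hb1 : ∀ j : ℕ, b (j + 1) = c ((j + a) % L + 1) := by
      intro j
      show c ((j + 1 + a) % L) = _
      rw [show j + 1 + a = (j + a) + 1 by omega, hwrap]
    have hb0' : b L = b 0 := by
      show c ((L + a) % L) = c ((0 + a) % L)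
      rw [Nat.add_comm L a, Nat.add_mod_right, Nat.zero_add]
    have hbinj : ∀ j j', j < L → j' < L → b j = b j' → j = j' := by
      intro j j' hj hj' hbb
      have := hinj _ _ (Nat.mod_lt _ (show 0 < L by omega)) (Nat.mod_lt _ (show 0 < L by omega)) hbb
      have h2' : j ≡ j' [MOD L] := (Nat.ModEq.add_right_cancel' a this)
      rwa [Nat.ModEq, Nat.mod_eq_of_lt hj, Nat.mod_eq_of_lt hj'] at h2'
    have hbadj : ∀ j, j < L → ((b j, b (j+1)) ∈ E ∨ (b (j+1), b j) ∈ E) := by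
      intro j hj
      rw [hb1 j]
      exact hadj _ (Nat.mod_lt _ (show 0 < L by omega))
    -- the chord for b
    set tF : Fin (m+3) := l - k with htF
    set t : ℕ := tF.val with ht
    have h5 : (t + a) % L = l.val := by
      have h6 : (tF.val + k.val) % (m+3) = ((tF + k : Fin (m+3))).val := by
        rw [Fin.add_def]
      show (tF.val + k.val) % (m+3) = l.val
      rw [h6, htF, sub_add_cancel]
    have hbt : b t = ch l := by
      show c ((t + a) % L) = c l.val
      rw [h5]
    have hb00 : b 0 = ch k := by
      show c ((0 + a) % L) = c k.val
      rw [Nat.zero_add, Nat.mod_eq_of_lt haL]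
    have hchord : (b 0, b t) ∈ E := by rw [hbt, hb00]; exact hkl
    have hchinj : Function.Injective ch := fun x y hxy =>
      Fin.ext (hinj _ _ x.isLt y.isLt hxy)
    have hbt1 : b (t + 1) = ch (l + 1) := by
      rw [hb1 t, h5, key l]
    have hb01 : b 1 = ch (k + 1) := by
      rw [hb1 0, Nat.zero_add, Nat.mod_eq_of_lt haL, key k]
    have ht2 : 2 ≤ t := by
      have ht0 : t ≠ 0 := by
        intro h
        apply hlk
        apply hchinj
        rw [← hbt, h, hb00]
      have ht1 : t ≠ 1 := by
        intro h
        apply h1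
        apply hchinj
        rw [← hbt, h, hb01]
      omega
    have htm : t ≤ m + 1 := by
      have htlt : t < m + 3 := tF.isLt
      have : t ≠ m + 2 := by
        intro h
        apply h2
        apply hchinj
        rw [← hb00, ← hbt1, h]
        exact (show b (m+2+1) = b 0 from hb0').symm
      omega
    -- forget the Fin-level data, keep only what is needed
    clear hbt1 hb01 hbt hb00 hchinj hkl h1 h2 hlk hsum key
    -- rotated sum equals the original sum
    have hrot : ∑ j ∈ Finset.range L, dd S S' (b j) (b (j+1))
        = ∑ j ∈ Finset.range L, dd S S' (c j) (c (j+1)) := by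
      rw [← sum_rotate (fun x => dd S S' (c x) (c (x+1))) L a haL]
      refine Finset.sum_congr rfl fun j hj => ?_
      rw [hb1 j]
    rw [← hrot]
    clear hrot
    clear hwrap hb1 hb h5 hadef htF ht hch
    clear_value t
    clear tF
    clear_value b
    clear haL
    clear_value L
    clear a k l ch
    obtain ⟨l', rfl⟩ : ∃ l', t = l' + 2 := ⟨t - 2, by omega⟩
    obtain ⟨m'', hm⟩ : ∃ m'', m = l' + 1 + m'' := ⟨m - 1 - l', by omega⟩
    subst hm
    -- first subcycle : b 0, b 1, ..., b (l'+2), back to b 0 via the chord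
    set c1 : ℕ → Fin n := fun j => b (j % (l'+3)) with hc1
    have hc1eq : ∀ j, j < l' + 3 → c1 j = b j := fun j hj => by
      show b (j % (l'+3)) = b j
      rw [Nat.mod_eq_of_lt hj]
    have hS1 : ∑ j ∈ Finset.range (l'+3), dd S S' (c1 j) (c1 (j+1)) = 0 := by
      apply IH l' (by omega)
      · show b ((l'+3) % (l'+3)) = b (0 % (l'+3))
        rw [Nat.mod_self, Nat.zero_mod]
      · intro j j' hj hj' hc
        rw [hc1eq _ hj, hc1eq _ hj'] at hc
        exact hbinj j j' (by omega) (by omega) hc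
      · intro j hj
        rcases Nat.lt_or_ge j (l'+2) with h | h
        · rw [hc1eq _ hj, hc1eq _ (by omega)]
          exact hbadj j (by omega)
        · have hje : j = l' + 2 := by omega
          subst hje
          rw [hc1eq _ hj]
          have : c1 (l' + 2 + 1) = b 0 := by
            show b ((l'+3) % (l'+3)) = b 0
            rw [Nat.mod_self]
          rw [this]
          exact Or.inr hchord
    -- second subcycle : b 0, b (l'+2), b (l'+3), ..., b (L-1), back to b 0
    set c2 : ℕ → Fin n := fun j =>
      if j % (m''+3) = 0 then b 0 else b (l' + 1 + j % (m''+3)) with hc2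
    have hc2_0 : c2 0 = b 0 := by
      show (if 0 % (m''+3) = 0 then b 0 else _) = b 0
      rw [Nat.zero_mod, if_pos rfl]
    have hc2L : c2 (m''+3) = b 0 := by
      show (if (m''+3) % (m''+3) = 0 then b 0 else _) = b 0
      rw [Nat.mod_self, if_pos rfl]
    have hc2eq : ∀ j, 1 ≤ j → j < m''+3 → c2 j = b (l' + 1 + j) := by
      intro j hj1 hj2
      show (if j % (m''+3) = 0 then b 0 else b (l' + 1 + j % (m''+3))) = _
      rw [Nat.mod_eq_of_lt hj2, if_neg (by omega)]
    have hS2 : ∑ j ∈ Finset.range (m''+3), dd S S' (c2 j) (c2 (j+1)) = 0 := by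
      apply IH m'' (by omega)
      · rw [hc2L, hc2_0]
      · intro j j' hj hj' hc
        rcases Nat.eq_zero_or_pos j with h | h <;> rcases Nat.eq_zero_or_pos j' with h' | h'
        · omega
        · subst h
          rw [hc2_0, hc2eq _ h' hj'] at hc
          have := hbinj 0 (l' + 1 + j') (by omega) (by omega) hc
          omega
        · subst h'
          rw [hc2_0, hc2eq _ h hj] at hc
          have := hbinj (l' + 1 + j) 0 (by omega) (by omega) hc
          omega
        · rw [hc2eq _ h hj, hc2eq _ h' hj'] at hc
          have := hbinj (l' + 1 + j) (l' + 1 + j') (by omega) (by omega) hc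
          omega
      · intro j hj
        rcases Nat.eq_zero_or_pos j with h | h
        · subst h
          rw [hc2_0, hc2eq 1 le_rfl (by omega)]
          rw [show l' + 1 + 1 = l' + 2 by omega]
          exact Or.inl hchord
        · rcases Nat.lt_or_ge j (m''+2) with h' | h'
          · rw [hc2eq _ h hj, hc2eq _ (by omega) (by omega),
              show l' + 1 + (j+1) = (l' + 1 + j) + 1 by omega]
            exact hbadj (l' + 1 + j) (by omega)
          · have hje : j = m'' + 2 := by omega
            subst hje
            rw [hc2eq _ h hj, hc2L]
            have h6 : l' + 1 + (m''+2) + 1 = L := by omega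
            have := hbadj (l' + 1 + (m''+2)) (by omega)
            rw [h6, hb0'] at this
            exact this
    -- combine the two subcycle identities
    rw [Finset.sum_range_succ] at hS1
    rw [Finset.sum_range_succ'] at hS2
    have e1 : ∑ j ∈ Finset.range (l'+2), dd S S' (c1 j) (c1 (j+1))
        = ∑ j ∈ Finset.range (l'+2), dd S S' (b j) (b (j+1)) := by
      refine Finset.sum_congr rfl fun j hj => ?_
      rw [Finset.mem_range] at hj
      rw [hc1eq _ (by omega), hc1eq _ (by omega)]
    have e2 : dd S S' (c1 (l'+2)) (c1 (l'+2+1)) = dd S S' (b (l'+2)) (b 0) := by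
      rw [hc1eq _ (by omega)]
      congr 1
      show b ((l'+3) % (l'+3)) = b 0
      rw [Nat.mod_self]
    have e3 : dd S S' (c2 0) (c2 1) = dd S S' (b 0) (b (l'+2)) := by
      rw [hc2_0, hc2eq 1 le_rfl (by omega), show l' + 1 + 1 = l' + 2 by omega]
    have e4 : ∑ j ∈ Finset.range (m''+2), dd S S' (c2 (j+1)) (c2 (j+1+1))
        = ∑ j ∈ Finset.range (m''+2), dd S S' (b (l'+2+j)) (b (l'+2+j+1)) := by
      refine Finset.sum_congr rfl fun j hj => ?_
      rw [Finset.mem_range] at hj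
      rw [hc2eq _ (by omega) (by omega)]
      rcases Nat.lt_or_ge j (m''+1) with h' | h'
      · rw [hc2eq _ (by omega) (by omega)]
        congr 2 <;> omega
      · have hje : j = m'' + 1 := by omega
        subst hje
        rw [show m'' + 1 + 1 = m'' + 2 by omega] at *
        rw [show m'' + 2 + 1 = m'' + 3 by omega, hc2L]
        have h6 : l' + 2 + (m''+1) + 1 = L := by omega
        rw [show l' + 1 + (m''+2) = l' + 2 + (m''+1) by omega, h6, hb0']
    rw [e1, e2] at hS1
    rw [e3, e4] at hS2
    rw [show L = (l'+2) + (m''+2) by omega, Finset.sum_range_add]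
    have hXY : dd S S' (b (l'+2)) (b 0) + dd S S' (b 0) (b (l'+2)) = 0 := by
      rw [dd_symm]
      exact CharTwo.add_self_eq_zero _
    calc (∑ j ∈ Finset.range (l'+2), dd S S' (b j) (b (j+1)))
          + ∑ j ∈ Finset.range (m''+2), dd S S' (b (l'+2+j)) (b (l'+2+j+1))
        = ((∑ j ∈ Finset.range (l'+2), dd S S' (b j) (b (j+1))) + dd S S' (b (l'+2)) (b 0))
          + ((∑ j ∈ Finset.range (m''+2), dd S S' (b (l'+2+j)) (b (l'+2+j+1)))
              + dd S S' (b 0) (b (l'+2)))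
          - (dd S S' (b (l'+2)) (b 0) + dd S S' (b 0) (b (l'+2))) := by ring
      _ = 0 := by rw [hS1, hS2, hXY]; ring

section dsum
variable {n : ℕ} (E S S' : Finset (Fin n × Fin n))

def dsum : {u v : Fin n} → (quiverGraph E).Walk u v → ZMod 2
  | _, _, .nil => 0
  | _, _, @SimpleGraph.Walk.cons _ _ u w _ _ p => dd S S' u w + dsum p

@[simp] lemma dsum_nil {u : Fin n} : dsum E S S' (.nil : (quiverGraph E).Walk u u) = 0 := rfl

@[simp] lemma dsum_cons {u w v : Fin n} (h : (quiverGraph E).Adj u w)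
    (p : (quiverGraph E).Walk w v) :
    dsum E S S' (.cons h p) = dd S S' u w + dsum E S S' p := rfl

lemma dsum_append {u v x : Fin n} (p : (quiverGraph E).Walk u v)
    (q : (quiverGraph E).Walk v x) :
    dsum E S S' (p.append q) = dsum E S S' p + dsum E S S' q := by
  induction p with
  | nil => simp
  | cons h p ih => simp [ih, add_assoc]

lemma dsum_reverse {u v : Fin n} (p : (quiverGraph E).Walk u v) :
    dsum E S S' p.reverse = dsum E S S' p := by
  induction p with
  | nil => simp
  | cons h p ih =>
      rw [SimpleGraph.Walk.reverse_cons, dsum_append, ih, dsum_cons, dsum_nil, dd_symm,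
        dsum_cons]
      ring


lemma walk_getD_zero (w : Fin n) {u v : Fin n} (p : (quiverGraph E).Walk u v) :
    p.support.getD 0 w = u := by
  rw [p.support_eq_cons]; rfl

lemma walk_getD_length (w : Fin n) {u v : Fin n} (p : (quiverGraph E).Walk u v) :
    p.support.getD p.length w = v := by
  induction p with
  | nil => rfl
  | cons h p ih =>
      rw [SimpleGraph.Walk.support_cons, SimpleGraph.Walk.length_cons, List.getD_cons_succ]
      exact ih

lemma walk_getD_adj (w : Fin n) {u v : Fin n} (p : (quiverGraph E).Walk u v) :
    ∀ j, j < p.length → (quiverGraph E).Adj (p.support.getD j w) (p.support.getD (j+1) w) := by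
  induction p with
  | nil => intro j hj; simp at hj
  | @cons a b x h p ih =>
      intro j hj
      rw [SimpleGraph.Walk.support_cons]
      match j with
      | 0 =>
          rw [List.getD_cons_zero, List.getD_cons_succ, walk_getD_zero]
          exact h
      | j + 1 =>
          rw [List.getD_cons_succ, List.getD_cons_succ]
          exact ih j (by simpa using Nat.lt_of_succ_lt_succ (by simpa using hj))

lemma getD_inj_of_nodup {α : Type*} (l : List α) (hl : l.Nodup) (d : α) (i j : ℕ)
    (hi : i < l.length) (hj : j < l.length) (h : l.getD i d = l.getD j d) : i = j := by
  rw [List.getD_eq_getElem _ _ hi, List.getD_eq_getElem _ _ hj] at h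
  exact hl.getElem_inj_iff.mp h

lemma dsum_eq_sum (w : Fin n) {u v : Fin n} (p : (quiverGraph E).Walk u v) :
    dsum E S S' p
      = ∑ i ∈ Finset.range p.length, dd S S' (p.support.getD i w) (p.support.getD (i+1) w) := by
  induction p with
  | nil => simp [dsum]
  | @cons a b x h p ih =>
      rw [SimpleGraph.Walk.support_cons, SimpleGraph.Walk.length_cons, Finset.sum_range_succ']
      simp only [List.getD_cons_succ, List.getD_cons_zero]
      rw [← ih, dsum_cons]
      have hh : p.support.getD 0 w = b := by rw [p.support_eq_cons]; rfl
      rw [hh]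
      ring

theorem dsum_closed (hq : IsClusterQuiver E)
    (hpar : ∀ (m : ℕ) (c : Fin (m + 3) → Fin n), IsFullCycle E c →
      arrowCount S c % 2 = arrowCount S' c % 2) :
    ∀ (N : ℕ) (v : Fin n) (p : (quiverGraph E).Walk v v), p.length = N →
      dsum E S S' p = 0 := by
  intro N
  induction N using Nat.strong_induction_on with
  | _ N IH =>
  intro v p hlen
  by_cases hnd : p.support.tail.Nodup
  · -- no repetition in the interior
    cases p with
    | nil => rfl
    | @cons _ u _ h q =>
      rw [SimpleGraph.Walk.length_cons] at hlen
      rcases Nat.lt_or_ge N 3 with hN3 | hN3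
      · -- length 1 or 2
        rcases Nat.lt_or_ge N 2 with hN2 | hN2
        · -- length 1 : a loop, impossible
          have h0 : q.length = 0 := by omega
          have := SimpleGraph.Walk.eq_of_length_eq_zero h0
          subst this
          exact absurd h ((quiverGraph E).irrefl)
        · -- length 2
          cases q with
          | nil => simp at hlen; omega
          | @cons _ x _ h' q' =>
            rw [SimpleGraph.Walk.length_cons] at hlen
            cases q' with
            | nil =>
              rw [dsum_cons, dsum_cons, dsum_nil, dd_symm]
              rw [add_zero]
              exact CharTwo.add_self_eq_zero _
            | cons h'' q'' => simp [SimpleGraph.Walk.length_cons] at hlen; omega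
      · -- length ≥ 3 : an honest cycle; use `cyc`
        set p : (quiverGraph E).Walk v v := SimpleGraph.Walk.cons h q with hp
        have hlenp : p.length = N := by rw [hp, SimpleGraph.Walk.length_cons]; omega
        obtain ⟨m, rfl⟩ : ∃ m, N = m + 3 := ⟨N - 3, by omega⟩
        set c : ℕ → Fin n := fun j => p.support.getD j v with hc
        have htail : p.support = v :: p.support.tail := p.support_eq_cons
        have htlen : p.support.tail.length = m + 3 := by
          have h7 : p.support.length = m + 4 := by
            rw [SimpleGraph.Walk.length_support, hlenp]
          have := congrArg List.length htail
          rw [h7] at this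
          simpa using this.symm
        have hchead : c 0 = v := walk_getD_zero E v p
        have hclast : c (m+3) = v := by
          have := walk_getD_length E v p
          rwa [hlenp] at this
        have h0c : c (m+3) = c 0 := by rw [hclast, hchead]
        have hctail : ∀ j, c (j + 1) = p.support.tail.getD j v := by
          intro j
          show p.support.getD (j+1) v = _
          conv_lhs => rw [htail]
          rw [List.getD_cons_succ]
        have hvtail : p.support.tail.getD (m+2) v = v := by
          rw [← hctail, hclast]
        have hinjc : ∀ j k, j < m+3 → k < m+3 → c j = c k → j = k := by
          intro j k hj hk hjk
          rcases Nat.eq_zero_or_pos j with hj0 | hj0 <;> rcases Nat.eq_zero_or_pos k with hk0 | hk0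
          · omega
          · subst hj0
            obtain ⟨k', rfl⟩ : ∃ k', k = k' + 1 := ⟨k - 1, by omega⟩
            rw [hchead, hctail] at hjk
            have := getD_inj_of_nodup _ hnd v (m+2) k' (by omega) (by omega)
              (by rw [hvtail, ← hjk])
            omega
          · subst hk0
            obtain ⟨j', rfl⟩ : ∃ j', j = j' + 1 := ⟨j - 1, by omega⟩
            rw [hchead, hctail] at hjk
            have := getD_inj_of_nodup _ hnd v (m+2) j' (by omega) (by omega)
              (by rw [hvtail, hjk])
            omega
          · obtain ⟨j', rfl⟩ : ∃ j', j = j' + 1 := ⟨j - 1, by omega⟩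
            obtain ⟨k', rfl⟩ : ∃ k', k = k' + 1 := ⟨k - 1, by omega⟩
            rw [hctail, hctail] at hjk
            have := getD_inj_of_nodup _ hnd v j' k' (by omega) (by omega) hjk
            omega
        have hadjc : ∀ j, j < m+3 → ((c j, c (j+1)) ∈ E ∨ (c (j+1), c j) ∈ E) := by
          intro j hj
          have hadj := walk_getD_adj E v p j (by omega)
          exact ((SimpleGraph.fromRel_adj _ _ _).mp hadj).2
        have := cyc E S S' hq hpar m c h0c hinjc hadjc
        rw [dsum_eq_sum E S S' v p, hlenp]
        exact this
  · -- a repeated interior vertex : split the closed walk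
    obtain ⟨w, hwdup⟩ := List.exists_duplicate_iff_not_nodup.mpr hnd
    have hwc : 2 ≤ p.support.tail.count w := List.duplicate_iff_two_le_count.mp hwdup
    cases p with
    | nil => simp at hwc
    | @cons _ u _ h q =>
      rw [SimpleGraph.Walk.length_cons] at hlen
      have htail : (SimpleGraph.Walk.cons h q).support.tail = q.support := by
        rw [SimpleGraph.Walk.support_cons]
        rfl
      rw [htail] at hwc
      by_cases hwv : w = v
      · -- the start vertex repeats inside
        subst hwv
        have hvq : w ∈ q.support := List.count_pos_iff.mp (by omega)
        have hspec := q.take_spec hvq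
        have hlen12 : (q.takeUntil w hvq).length + (q.dropUntil w hvq).length = q.length := by
          rw [← SimpleGraph.Walk.length_append, hspec]
        have hq2pos : 1 ≤ (q.dropUntil w hvq).length := by
          by_contra hq20
          have h20 : (q.dropUntil w hvq).length = 0 := by omega
          have hq2nil : q.dropUntil w hvq = SimpleGraph.Walk.nil := by
            cases hdrop : q.dropUntil w hvq with
            | nil => rfl
            | cons h' q' => rw [hdrop, SimpleGraph.Walk.length_cons] at h20; omega
          have hqq : q = q.takeUntil w hvq := by
            conv_lhs => rw [← hspec]
            rw [hq2nil, SimpleGraph.Walk.append_nil]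
          have hcount := q.count_support_takeUntil_eq_one hvq
          rw [← hqq] at hcount
          omega
        have hd : dsum E S S' q
            = dsum E S S' (q.takeUntil w hvq) + dsum E S S' (q.dropUntil w hvq) := by
          conv_lhs => rw [← hspec]
          rw [dsum_append]
        have hC1 : dsum E S S' (SimpleGraph.Walk.cons h (q.takeUntil w hvq)) = 0 :=
          IH ((q.takeUntil w hvq).length + 1) (by omega) w _
            (by rw [SimpleGraph.Walk.length_cons])
        have hC2 : dsum E S S' (q.dropUntil w hvq) = 0 :=
          IH (q.dropUntil w hvq).length (by omega) w _ rfl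
        rw [dsum_cons, hd, hC2, add_zero, ← dsum_cons E S S' h (q.takeUntil w hvq)]
        exact hC1
      · -- some other vertex repeats
        have hwq : w ∈ q.support := List.count_pos_iff.mp (by omega)
        have hwp : w ∈ (SimpleGraph.Walk.cons h q).support := by
          rw [SimpleGraph.Walk.support_cons]
          exact List.mem_cons_of_mem _ hwq
        set P := SimpleGraph.Walk.cons h q with hP
        have hspec := P.take_spec hwp
        have hsupp : P.support = (P.takeUntil w hwp).support ++ (P.dropUntil w hwp).support.tail := by
          conv_lhs => rw [← hspec]
          rw [SimpleGraph.Walk.support_append]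
        have hcnt1 : (P.takeUntil w hwp).support.count w = 1 :=
          P.count_support_takeUntil_eq_one hwp
        have hcntP : 2 ≤ P.support.count w := by
          rw [hP, SimpleGraph.Walk.support_cons, List.count_cons]
          simp only [beq_iff_eq, if_neg (fun hh : v = w => hwv hh.symm)]
          omega
        have hcnt2 : 1 ≤ List.count w (P.dropUntil w hwp).support.tail := by
          have h9 := congrArg (List.count w) hsupp
          rw [List.count_append] at h9
          omega
        have hw2 : w ∈ (P.dropUntil w hwp).support.tail :=
          List.count_pos_iff.mp hcnt2
        have hlenPs : (P.takeUntil w hwp).length + (P.dropUntil w hwp).length = P.length := by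
          rw [← SimpleGraph.Walk.length_append, hspec]
        have hp1pos : 1 ≤ (P.takeUntil w hwp).length := by
          by_contra hp10
          exact hwv (SimpleGraph.Walk.eq_of_length_eq_zero (p := P.takeUntil w hwp) (by omega)).symm
        obtain ⟨x, hx, r, hp2⟩ := SimpleGraph.Walk.exists_eq_cons_of_ne
          (fun hh => hwv hh) (P.dropUntil w hwp)
        have hwr : w ∈ r.support := by
          rw [hp2, SimpleGraph.Walk.support_cons] at hw2
          exact hw2
        have hrspec := r.take_spec hwr
        have hrlen : (r.takeUntil w hwr).length + (r.dropUntil w hwr).length = r.length := by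
          rw [← SimpleGraph.Walk.length_append, hrspec]
        have hp2len : (P.dropUntil w hwp).length = r.length + 1 := by
          rw [hp2, SimpleGraph.Walk.length_cons]
        have hNlen : P.length = N := hlen ▸ (by rw [hP, SimpleGraph.Walk.length_cons])
        have hC1 : dsum E S S' (SimpleGraph.Walk.cons hx (r.takeUntil w hwr)) = 0 := by
          apply IH ((r.takeUntil w hwr).length + 1) (by omega) w _
          rw [SimpleGraph.Walk.length_cons]
        have hC2 : dsum E S S' ((P.takeUntil w hwp).append (r.dropUntil w hwr)) = 0 := by
          apply IH ((P.takeUntil w hwp).length + (r.dropUntil w hwr).length) (by omega) v _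
          rw [SimpleGraph.Walk.length_append]
        rw [dsum_append] at hC2
        rw [dsum_cons] at hC1
        have e : dsum E S S' P
            = (dsum E S S' (P.takeUntil w hwp) + dsum E S S' (r.dropUntil w hwr))
              + (dd S S' w x + dsum E S S' (r.takeUntil w hwr)) := by
          conv_lhs => rw [← hspec]
          rw [dsum_append, hp2, dsum_cons]
          conv_lhs => rw [← hrspec]
          rw [dsum_append]
          ring
        show dsum E S S' P = 0
        rw [e, hC1, hC2, add_zero]

end dsum

/-- for a finite connected simply-laced cluster quiver with no non-oriented
full cycle, if `S` and `S'` are two different sets of arrows meeting every full cycle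
with the same parity, then `Σ(q_{S'})` is obtained from `Σ(q_S)` by switching at the
vertices of a proper subset `W` of the vertex set. -/
theorem signed_graphs_switching_equivalent {n : ℕ}
    (E : Finset (Fin n × Fin n)) (hq : IsClusterQuiver E)
    (hconn : (quiverGraph E).Connected)
    (hor : ∀ (m : ℕ) (c : Fin (m + 3) → Fin n), IsFullCycle E c → IsOrientedCycle E c)
    (S S' : Finset (Fin n × Fin n)) (hS : S ⊆ E) (hS' : S' ⊆ E) (hne : S ≠ S')
    (hpar : ∀ (m : ℕ) (c : Fin (m + 3) → Fin n), IsFullCycle E c →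
      arrowCount S c % 2 = arrowCount S' c % 2) :
    ∃ W : Finset (Fin n), W ≠ Finset.univ ∧
      signOf E S' = switchSet (signOf E S) W := by
  obtain ⟨v0⟩ : Nonempty (Fin n) := hconn.nonempty
  have hreach : ∀ u : Fin n, (quiverGraph E).Reachable v0 u := fun u => hconn.preconnected v0 u
  set f : Fin n → ZMod 2 :=
    fun u => dsum E S S' (hreach u).some + dsum E S S' (hreach v0).some with hf
  have hfv0 : f v0 = 0 := CharTwo.add_self_eq_zero _
  have hkey : ∀ i j : Fin n, (quiverGraph E).Adj i j → f i + f j = dd S S' i j := by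
    intro i j hadj
    have hclosed := dsum_closed E S S' hq hpar _ v0
      ((hreach i).some.append (SimpleGraph.Walk.cons hadj ((hreach j).some.reverse))) rfl
    rw [dsum_append, dsum_cons, dsum_reverse] at hclosed
    show dsum E S S' (hreach i).some + dsum E S S' (hreach v0).some
      + (dsum E S S' (hreach j).some + dsum E S S' (hreach v0).some) = dd S S' i j
    revert hclosed
    generalize dsum E S S' (hreach i).some = A
    generalize dsum E S S' (hreach j).some = B
    generalize dsum E S S' (hreach v0).some = C
    generalize dd S S' i j = D
    revert A B C D
    decide
  set W : Finset (Fin n) := Finset.univ.filter (fun u => f u = 1) with hW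
  have hmemW : ∀ u, u ∈ W ↔ f u = 1 := by
    intro u
    rw [hW, Finset.mem_filter]
    simp
  refine ⟨W, ?_, ?_⟩
  · intro hWuniv
    have hv0W : v0 ∈ W := hWuniv ▸ Finset.mem_univ v0
    rw [hmemW, hfv0] at hv0W
    exact absurd hv0W (by decide)
  · funext i j
    show signOf E S' i j = switchSet (signOf E S) W i j
    simp only [signOf, switchSet]
    by_cases hE : (i, j) ∈ E ∨ (j, i) ∈ E
    · have hij : i ≠ j := by
        rcases hE with h | h
        · exact hq.1 _ h
        · exact (hq.1 _ h).symm
      have hadj : (quiverGraph E).Adj i j := (SimpleGraph.fromRel_adj _ i j).mpr ⟨hij, hE⟩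
      have hk := hkey i j hadj
      have hiff : ((i ∈ W) ↔ (j ∈ W)) ↔ f i = f j := by
        rw [hmemW, hmemW]
        constructor
        · intro hh
          revert hh hk
          generalize f i = A; generalize f j = B; generalize dd S S' i j = D
          revert A B D
          decide
        · intro hh; rw [hh]
      rw [if_pos hE, if_pos hE]
      by_cases hS1 : (i, j) ∈ S ∨ (j, i) ∈ S <;> by_cases hS2 : (i, j) ∈ S' ∨ (j, i) ∈ S'
      · have hdd : dd S S' i j = 0 := by unfold dd; rw [if_pos hS1, if_pos hS2]; decide
        rw [hdd] at hk
        have hfij : f i = f j := by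
          revert hk; generalize f i = A; generalize f j = B; revert A B; decide
        rw [if_pos (hiff.mpr hfij), if_pos hS1, if_pos hS2]
      · have hdd : dd S S' i j = 1 := by unfold dd; rw [if_pos hS1, if_neg hS2]; decide
        rw [hdd] at hk
        have hfij : f i ≠ f j := by
          revert hk; generalize f i = A; generalize f j = B; revert A B; decide
        rw [if_neg (fun hh => hfij (hiff.mp hh)), if_pos hS1, if_neg hS2]
      · have hdd : dd S S' i j = 1 := by unfold dd; rw [if_neg hS1, if_pos hS2]; decide
        rw [hdd] at hk
        have hfij : f i ≠ f j := by
          revert hk; generalize f i = A; generalize f j = B; revert A B; decide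
        rw [if_neg (fun hh => hfij (hiff.mp hh)), if_neg hS1, if_pos hS2]
        norm_num
      · have hdd : dd S S' i j = 0 := by unfold dd; rw [if_neg hS1, if_neg hS2]; decide
        rw [hdd] at hk
        have hfij : f i = f j := by
          revert hk; generalize f i = A; generalize f j = B; revert A B; decide
        rw [if_pos (hiff.mpr hfij), if_neg hS1, if_neg hS2]
    · rw [if_neg hE, if_neg hE]
      split <;> norm_num
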